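/- Let m be a positive integer, τ ∈ ℍ, and z ∈ ℂ with 0 < Im z < Im τ; set y := e^{2πiz}. Then Σ_{k∈ℤ} y^{2km} q^{mk²} / (1 − y q^k) = Σ_{k≥0, l≥0} y^{2km+l} q^{mk² + kl} − Σ_{k<0, l<0} y^{2km+l} q^{mk² + kl}, where all three series converge absolutely (k, l range over ℤ subject to the stated inequalities). -/

import Mathlib

/-!
For `k ≥ 0` we have `|y qᵏ| < 1`, so `1/(1 - y qᵏ) = Σ_{l ≥ 0} (y qᵏ)ˡ`; for `k < 0` we have
`|y qᵏ| > 1`, so `1/(1 - y qᵏ) = -Σ_{l < 0} (y qᵏ)ˡ`. Multiplying by `y^{2km} q^{mk²}` turns the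
`k`-th term of the left side into the `k`-th row of the right side. On each quadrant the terms are
dominated by a product of two geometric series, so the double series converges absolutely and
may be summed row by row.
-/

open Complex Real

/-- `qp τ c` is `q^c = e^{2πicτ}`. -/
noncomputable def qp (τ : ℂ) (c : ℝ) : ℂ := Complex.exp (2 * Real.pi * Complex.I * c * τ)

section Series

variable {ι κ E : Type*}

lemma norm_ite_zero [SeminormedAddCommGroup E] (p : Prop) [Decidable p] (x : E) :
    ‖if p then x else 0‖ = if p then ‖x‖ else 0 := by
  split_ifs <;> simp

lemma summable_ite_of_summable_ite_norm [SeminormedAddCommGroup E] [CompleteSpace E]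
    {p : ι → Prop} [DecidablePred p] {f : ι → E}
    (hf : Summable fun i => if p i then ‖f i‖ else 0) :
    Summable fun i => if p i then f i else 0 :=
  .of_norm <| by simpa only [norm_ite_zero] using hf

lemma summable_ite_of_summable_comp [AddCommMonoid E] [TopologicalSpace E]
    {p : ι → Prop} [DecidablePred p] {g : κ → ι} (hg : g.Injective)
    (hrange : ∀ i, p i ↔ i ∈ Set.range g) {f : ι → E} (hf : Summable (f ∘ g)) :
    Summable fun i => if p i then f i else 0 := by
  refine (hg.summable_iff fun i hi => if_neg fun h => hi ((hrange i).1 h)).1 ?_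
  refine hf.congr fun k => ?_
  simp [(hrange (g k)).2 ⟨k, rfl⟩]

lemma summable_pow_mul_pow {r ρ : ℝ} (hr₀ : 0 ≤ r) (hr₁ : r < 1) (hρ₀ : 0 ≤ ρ) (hρ₁ : ρ < 1) :
    Summable fun p : ℕ × ℕ => r ^ p.1 * ρ ^ p.2 :=
  (summable_geometric_of_lt_one hr₀ hr₁).mul_of_nonneg (summable_geometric_of_lt_one hρ₀ hρ₁)
    (fun _ => pow_nonneg hr₀ _) (fun _ => pow_nonneg hρ₀ _)

lemma summable_norm_of_hasSum_fiberwise {β γ : Type*} [NormedAddCommGroup E]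
    {F : β × γ → E} {g : β → E} (hF : Summable fun n => ‖F n‖)
    (hg : ∀ b, HasSum (fun c => F (b, c)) (g b)) : Summable fun b => ‖g b‖ :=
  hF.prod.of_nonneg_of_le (fun _ => norm_nonneg _) fun b =>
    (hg b).tsum_eq ▸ norm_tsum_le_tsum_norm (hF.prod_factor b)

variable {K : Type*} [NormedDivisionRing K]

lemma hasSum_ite_nonneg_zpow {w : K} (hw : ‖w‖ < 1) :
    HasSum (fun l : ℤ => if 0 ≤ l then w ^ l else 0) (1 - w)⁻¹ := by
  have hnat : HasSum (fun n : ℕ => if 0 ≤ (n : ℤ) then w ^ (n : ℤ) else 0) (1 - w)⁻¹ :=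
    (hasSum_geometric_of_norm_lt_one hw).congr_fun fun n => by simp
  have hneg : HasSum (fun n : ℕ => if 0 ≤ -((n : ℤ) + 1) then w ^ (-((n : ℤ) + 1)) else 0) 0 :=
    hasSum_zero.congr_fun fun n => if_neg (by omega)
  simpa using
    HasSum.of_nat_of_neg_add_one (f := fun l : ℤ => if 0 ≤ l then w ^ l else 0) hnat hneg

lemma hasSum_ite_neg_zpow {w : K} (hw : 1 < ‖w‖) :
    HasSum (fun l : ℤ => if l < 0 then w ^ l else 0) (w - 1)⁻¹ := by
  have hw₀ : w ≠ 0 := norm_pos_iff.1 (one_pos.trans hw)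
  have hinv : ‖w⁻¹‖ < 1 := by rw [norm_inv]; exact inv_lt_one_of_one_lt₀ hw
  have hnat : HasSum (fun n : ℕ => if (n : ℤ) < 0 then w ^ (n : ℤ) else 0) 0 :=
    hasSum_zero.congr_fun fun n => if_neg (by omega)
  have hneg : HasSum (fun n : ℕ => if -((n : ℤ) + 1) < 0 then w ^ (-((n : ℤ) + 1)) else 0)
      (w⁻¹ * (1 - w⁻¹)⁻¹) := by
    refine ((hasSum_geometric_of_norm_lt_one hinv).mul_left w⁻¹).congr_fun fun n => ?_
    rw [if_pos (by omega), zpow_neg, ← pow_succ', inv_pow]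
    norm_cast
  have hsum : w⁻¹ * (1 - w⁻¹)⁻¹ = (w - 1)⁻¹ := by
    rw [← mul_inv_rev, sub_mul, one_mul, inv_mul_cancel₀ hw₀]
  simpa [hsum] using
    HasSum.of_nat_of_neg_add_one (f := fun l : ℤ => if l < 0 then w ^ l else 0) hnat hneg

end Series

lemma qp_add (τ : ℂ) (a b : ℝ) : qp τ (a + b) = qp τ a * qp τ b := by
  rw [qp, qp, qp, ← Complex.exp_add]
  congr 1
  push_cast
  ring

lemma qp_zpow (τ : ℂ) (c : ℝ) (n : ℤ) : qp τ c ^ n = qp τ (n * c) := by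
  rw [qp, qp, ← Complex.exp_int_mul]
  congr 1
  push_cast
  ring

lemma norm_qp (τ : ℂ) (c : ℝ) : ‖qp τ c‖ = Real.exp (-(2 * π * c * τ.im)) := by
  rw [qp, Complex.norm_exp]
  congr 1
  simp [Complex.mul_re, Complex.mul_im]

noncomputable def coneTerm (m : ℕ) (τ y : ℂ) (n : ℤ × ℤ) : ℂ :=
  y ^ (2 * n.1 * (m : ℤ) + n.2) * qp τ ((m : ℝ) * (n.1 : ℝ) ^ 2 + (n.1 : ℝ) * (n.2 : ℝ))

variable {m : ℕ} {τ z y : ℂ}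

lemma coneTerm_eq_mul_zpow (hy : y ≠ 0) (k l : ℤ) :
    coneTerm m τ y (k, l) =
      y ^ (2 * k * (m : ℤ)) * qp τ ((m : ℝ) * (k : ℝ) ^ 2) * (y * qp τ (k : ℝ)) ^ l := by
  rw [coneTerm, zpow_add₀ hy, mul_zpow, qp_zpow, mul_comm (k : ℝ) (l : ℝ), qp_add]
  ring

lemma norm_coneTerm (n : ℤ × ℤ) :
    ‖coneTerm m τ (qp z 1) n‖ = Real.exp (-(2 * π) *
      ((2 * n.1 * m + n.2) * z.im + (m * n.1 ^ 2 + n.1 * n.2) * τ.im)) := by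
  rw [coneTerm, qp_zpow, norm_mul, norm_qp, norm_qp, ← Real.exp_add]
  congr 1
  push_cast
  ring

lemma norm_coneTerm_natCast_le (hz : 0 ≤ z.im) (hτ : 0 ≤ τ.im) (a b : ℕ) :
    ‖coneTerm m τ (qp z 1) (a, b)‖ ≤
      Real.exp (-(2 * π * (m * τ.im))) ^ a * Real.exp (-(2 * π * z.im)) ^ b := by
  rw [norm_coneTerm, ← Real.exp_nat_mul, ← Real.exp_nat_mul, ← Real.exp_add, Real.exp_le_exp]
  have hπ := Real.pi_pos
  have ha : (a : ℝ) ≤ (a : ℝ) ^ 2 := by exact_mod_cast Nat.le_self_pow two_ne_zero a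
  have hm : (0 : ℝ) ≤ m := Nat.cast_nonneg m
  have ha₀ : (0 : ℝ) ≤ a := Nat.cast_nonneg a
  have hb₀ : (0 : ℝ) ≤ b := Nat.cast_nonneg b
  push_cast
  nlinarith [mul_nonneg (mul_nonneg hm ha₀) hz, mul_nonneg (mul_nonneg ha₀ hb₀) hτ,
    mul_le_mul_of_nonneg_left ha (mul_nonneg hm hτ)]

lemma norm_coneTerm_neg_add_one_le (hzτ : z.im ≤ τ.im) (hτ : 0 ≤ τ.im) (a b : ℕ) :
    ‖coneTerm m τ (qp z 1) (-(a + 1), -(b + 1))‖ ≤ Real.exp (2 * π * (m * τ.im)) *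
      (Real.exp (-(2 * π * (m * τ.im))) ^ a * Real.exp (-(2 * π * (τ.im - z.im))) ^ b) := by
  rw [norm_coneTerm, ← Real.exp_nat_mul, ← Real.exp_nat_mul, ← Real.exp_add, ← Real.exp_add,
    Real.exp_le_exp]
  have hπ := Real.pi_pos
  have ha : (a : ℝ) ≤ (a : ℝ) ^ 2 := by exact_mod_cast Nat.le_self_pow two_ne_zero a
  have hm : (0 : ℝ) ≤ m := Nat.cast_nonneg m
  have ha₀ : (0 : ℝ) ≤ a := Nat.cast_nonneg a
  have hb₀ : (0 : ℝ) ≤ b := Nat.cast_nonneg b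
  have hts : 0 ≤ τ.im - z.im := sub_nonneg.2 hzτ
  push_cast
  nlinarith [mul_nonneg (mul_nonneg hm (add_nonneg ha₀ zero_le_one)) hts,
    mul_nonneg (mul_nonneg hm hτ) (sub_nonneg.2 ha),
    mul_nonneg (mul_nonneg (add_nonneg hb₀ zero_le_one) ha₀) hτ]

lemma summable_norm_coneTerm_nonneg_quadrant (hm : 0 < m) (hz : 0 < z.im)
    (hzτ : z.im ≤ τ.im) :
    Summable fun n : ℤ × ℤ => if 0 ≤ n.1 ∧ 0 ≤ n.2 then ‖coneTerm m τ (qp z 1) n‖ else 0 := by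
  have hτ : 0 < τ.im := hz.trans_le hzτ
  refine summable_ite_of_summable_comp (g := fun p : ℕ × ℕ => ((p.1 : ℤ), (p.2 : ℤ)))
    (fun p q h => by simp_all [Prod.ext_iff])
    (fun n => ⟨fun h => ⟨(n.1.toNat, n.2.toNat), ?_⟩, ?_⟩) ?_
  · ext <;> simp [h.1, h.2]
  · rintro ⟨p, rfl⟩; simp
  · refine (summable_pow_mul_pow (Real.exp_nonneg _) ?_ (Real.exp_nonneg _) ?_).of_nonneg_of_le
      (fun _ => norm_nonneg _) fun p => norm_coneTerm_natCast_le hz.le hτ.le p.1 p.2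
    · have : (0 : ℝ) < m := by exact_mod_cast hm
      exact Real.exp_lt_one_iff.2 (neg_lt_zero.2 (by positivity))
    · exact Real.exp_lt_one_iff.2 (neg_lt_zero.2 (by positivity))

lemma summable_norm_coneTerm_neg_quadrant (hm : 0 < m) (hzτ : z.im < τ.im) (hτ : 0 < τ.im) :
    Summable fun n : ℤ × ℤ => if n.1 < 0 ∧ n.2 < 0 then ‖coneTerm m τ (qp z 1) n‖ else 0 := by
  refine summable_ite_of_summable_comp
    (g := fun p : ℕ × ℕ => (-((p.1 : ℤ) + 1), -((p.2 : ℤ) + 1)))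
    (fun p q h => by simp_all [Prod.ext_iff])
    (fun n => ⟨fun h => ⟨((-n.1 - 1).toNat, (-n.2 - 1).toNat), ?_⟩, ?_⟩) ?_
  · ext <;> dsimp only <;> omega
  · rintro ⟨p, rfl⟩; dsimp only; omega
  · have : (0 : ℝ) < m := by exact_mod_cast hm
    refine ((summable_pow_mul_pow (Real.exp_nonneg _) ?_ (Real.exp_nonneg _) ?_).mul_left
      _).of_nonneg_of_le (fun _ => norm_nonneg _) fun p =>
        norm_coneTerm_neg_add_one_le hzτ.le hτ.le p.1 p.2
    · exact Real.exp_lt_one_iff.2 (neg_lt_zero.2 (by positivity))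
    · exact Real.exp_lt_one_iff.2 (neg_lt_zero.2 (mul_pos Real.two_pi_pos (sub_pos.2 hzτ)))

lemma hasSum_coneTerm_fiber (hz : 0 < z.im) (hzτ : z.im < τ.im) (k : ℤ) :
    HasSum (fun l : ℤ => (if 0 ≤ k ∧ 0 ≤ l then coneTerm m τ (qp z 1) (k, l) else 0) -
        (if k < 0 ∧ l < 0 then coneTerm m τ (qp z 1) (k, l) else 0))
      (qp z 1 ^ (2 * k * (m : ℤ)) * qp τ ((m : ℝ) * (k : ℝ) ^ 2) /
        (1 - qp z 1 * qp τ (k : ℝ))) := by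
  set A := qp z 1 ^ (2 * k * (m : ℤ)) * qp τ ((m : ℝ) * (k : ℝ) ^ 2)
  set w := qp z 1 * qp τ (k : ℝ)
  have hterm (l : ℤ) : coneTerm m τ (qp z 1) (k, l) = A * w ^ l :=
    coneTerm_eq_mul_zpow (Complex.exp_ne_zero _) k l
  have hnorm : ‖w‖ = Real.exp (-(2 * π * (z.im + k * τ.im))) := by
    rw [norm_mul, norm_qp, norm_qp, ← Real.exp_add]
    ring_nf
  have hτ : 0 < τ.im := hz.trans hzτ
  rcases le_or_gt 0 k with hk | hk
  · have hw : ‖w‖ < 1 := by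
      have : (0 : ℝ) ≤ k := by exact_mod_cast hk
      rw [hnorm]
      exact Real.exp_lt_one_iff.2 (neg_lt_zero.2 (mul_pos Real.two_pi_pos (by positivity)))
    rw [div_eq_mul_inv]
    refine ((hasSum_ite_nonneg_zpow hw).mul_left A).congr_fun fun l => ?_
    simp [hk, hterm]
  · have hw : 1 < ‖w‖ := by
      have : (k : ℝ) ≤ -1 := by exact_mod_cast Int.le_sub_one_of_lt hk
      rw [hnorm]
      refine Real.one_lt_exp_iff.2 (neg_pos.2 (mul_neg_of_pos_of_neg Real.two_pi_pos ?_))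
      nlinarith
    have hval : A / (1 - w) = -A * (w - 1)⁻¹ := by
      rw [div_eq_mul_inv, ← neg_sub w 1, inv_neg, mul_neg, neg_mul]
    rw [hval]
    refine ((hasSum_ite_neg_zpow hw).mul_left (-A)).congr_fun fun l => ?_
    by_cases hl : l < 0 <;> simp [hk, hl, hterm, not_le.2 hk]

theorem f1_cone_expansion_general (m : ℕ) (hm : 0 < m) (τ z : ℂ)
    (hz0 : 0 < z.im) (hz1 : z.im < τ.im)
    (y : ℂ) (hy : y = Complex.exp (2 * Real.pi * Complex.I * z)) :
    Summable (fun k : ℤ =>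
      ‖y ^ (2 * k * (m : ℤ)) * qp τ ((m : ℝ) * (k : ℝ) ^ 2) / (1 - y * qp τ (k : ℝ))‖) ∧
    Summable (fun n : ℤ × ℤ => if 0 ≤ n.1 ∧ 0 ≤ n.2 then
      ‖y ^ (2 * n.1 * (m : ℤ) + n.2) * qp τ ((m : ℝ) * (n.1 : ℝ) ^ 2 + (n.1 : ℝ) * (n.2 : ℝ))‖
      else 0) ∧
    Summable (fun n : ℤ × ℤ => if n.1 < 0 ∧ n.2 < 0 then
      ‖y ^ (2 * n.1 * (m : ℤ) + n.2) * qp τ ((m : ℝ) * (n.1 : ℝ) ^ 2 + (n.1 : ℝ) * (n.2 : ℝ))‖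
      else 0) ∧
    (∑' k : ℤ, y ^ (2 * k * (m : ℤ)) * qp τ ((m : ℝ) * (k : ℝ) ^ 2) / (1 - y * qp τ (k : ℝ))) =
      (∑' n : ℤ × ℤ, if 0 ≤ n.1 ∧ 0 ≤ n.2 then
        y ^ (2 * n.1 * (m : ℤ) + n.2) * qp τ ((m : ℝ) * (n.1 : ℝ) ^ 2 + (n.1 : ℝ) * (n.2 : ℝ))
        else 0) -
      (∑' n : ℤ × ℤ, if n.1 < 0 ∧ n.2 < 0 then
        y ^ (2 * n.1 * (m : ℤ) + n.2) * qp τ ((m : ℝ) * (n.1 : ℝ) ^ 2 + (n.1 : ℝ) * (n.2 : ℝ))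
        else 0) := by
  obtain rfl : y = qp z 1 := by rw [hy, qp]; push_cast; ring_nf
  have hpos := summable_norm_coneTerm_nonneg_quadrant hm hz0 hz1.le
  have hneg := summable_norm_coneTerm_neg_quadrant hm hz1 (hz0.trans hz1)
  have hdiff := (summable_ite_of_summable_ite_norm hpos).hasSum.sub
    (summable_ite_of_summable_ite_norm hneg).hasSum
  have hdiff_norm : Summable fun n : ℤ × ℤ =>
      ‖(if 0 ≤ n.1 ∧ 0 ≤ n.2 then coneTerm m τ (qp z 1) n else 0) -
        (if n.1 < 0 ∧ n.2 < 0 then coneTerm m τ (qp z 1) n else 0)‖ :=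
    (hpos.add hneg).of_nonneg_of_le (fun _ => norm_nonneg _) fun n =>
      (norm_sub_le _ _).trans_eq (by rw [norm_ite_zero, norm_ite_zero])
  exact ⟨summable_norm_of_hasSum_fiberwise hdiff_norm (hasSum_coneTerm_fiber hz0 hz1), hpos, hneg,
    (hdiff.prod_fiberwise (hasSum_coneTerm_fiber hz0 hz1)).tsum_eq⟩

/-- Geometric expansion of `f₁`: for `0 < Im z < Im τ`,
`Σ_{k∈ℤ} y^{2km} q^{mk²}/(1 - y q^k) = Σ_{k≥0,l≥0} y^{2km+l} q^{mk²+kl}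
  - Σ_{k<0,l<0} y^{2km+l} q^{mk²+kl}`. -/
theorem f1_cone_expansion (m : ℕ) (hm : 0 < m) (τ z : ℂ) (hτ : 0 < τ.im)
    (hz0 : 0 < z.im) (hz1 : z.im < τ.im)
    (y : ℂ) (hy : y = Complex.exp (2 * Real.pi * Complex.I * z)) :
    Summable (fun k : ℤ =>
      ‖y ^ (2 * k * (m : ℤ)) * qp τ ((m : ℝ) * (k : ℝ) ^ 2) / (1 - y * qp τ (k : ℝ))‖) ∧
    Summable (fun n : ℤ × ℤ => if 0 ≤ n.1 ∧ 0 ≤ n.2 then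
      ‖y ^ (2 * n.1 * (m : ℤ) + n.2) * qp τ ((m : ℝ) * (n.1 : ℝ) ^ 2 + (n.1 : ℝ) * (n.2 : ℝ))‖
      else 0) ∧
    Summable (fun n : ℤ × ℤ => if n.1 < 0 ∧ n.2 < 0 then
      ‖y ^ (2 * n.1 * (m : ℤ) + n.2) * qp τ ((m : ℝ) * (n.1 : ℝ) ^ 2 + (n.1 : ℝ) * (n.2 : ℝ))‖
      else 0) ∧
    (∑' k : ℤ, y ^ (2 * k * (m : ℤ)) * qp τ ((m : ℝ) * (k : ℝ) ^ 2) / (1 - y * qp τ (k : ℝ))) =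
      (∑' n : ℤ × ℤ, if 0 ≤ n.1 ∧ 0 ≤ n.2 then
        y ^ (2 * n.1 * (m : ℤ) + n.2) * qp τ ((m : ℝ) * (n.1 : ℝ) ^ 2 + (n.1 : ℝ) * (n.2 : ℝ))
        else 0) -
      (∑' n : ℤ × ℤ, if n.1 < 0 ∧ n.2 < 0 then
        y ^ (2 * n.1 * (m : ℤ) + n.2) * qp τ ((m : ℝ) * (n.1 : ℝ) ^ 2 + (n.1 : ℝ) * (n.2 : ℝ))
        else 0) :=
  f1_cone_expansion_general m hm τ z hz0 hz1 y hy
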